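/- Let e, f ∈ ℝ³ with ‖e‖ ≤ 1 and ‖f‖ ≤ 1, and consider the binary qubit observables E = (E₊, E₋) and F = (F₊, F₋) on ℂ² given by E_± = (1/2)(1 ± e·σ) and F_± = (1/2)(1 ± f·σ), where σ = (σ₁, σ₂, σ₃) are the Pauli matrices and e·σ = e₁σ₁ + e₂σ₂ + e₃σ₃. If ‖e + f‖ + ‖e − f‖ ≤ 2, then E and F are jointly measurable. -/

import Mathlib

open Matrix BigOperators
open scoped ComplexOrder

/-- Joint measurability of two finite-outcome observables. -/
def JointlyMeasurable {d : ℕ} {Ω₁ Ω₂ : Type*} [Fintype Ω₁] [Fintype Ω₂]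
    (E : Ω₁ → Matrix (Fin d) (Fin d) ℂ) (F : Ω₂ → Matrix (Fin d) (Fin d) ℂ) : Prop :=
  ∃ G : Ω₁ × Ω₂ → Matrix (Fin d) (Fin d) ℂ,
    (∀ p, (G p).PosSemidef) ∧ (∀ i, ∑ j, G (i, j) = E i) ∧ (∀ j, ∑ i, G (i, j) = F j)

/-- The Pauli matrices. -/
noncomputable def pauli : Fin 3 → Matrix (Fin 2) (Fin 2) ℂ
  | 0 => !![0, 1; 1, 0]
  | 1 => !![0, -Complex.I; Complex.I, 0]
  | 2 => !![1, 0; 0, -1]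

/-- `e·σ` for a real vector `e ∈ ℝ³`. -/
noncomputable def dotPauli (e : EuclideanSpace ℝ (Fin 3)) : Matrix (Fin 2) (Fin 2) ℂ :=
  ∑ i, (e i : ℂ) • pauli i

/-- The binary unbiased qubit observable with Bloch vector `e`:
`E(±) = ½(1 ± e·σ)`. -/
noncomputable def blochObs (e : EuclideanSpace ℝ (Fin 3)) :
    Bool → Matrix (Fin 2) (Fin 2) ℂ := fun b =>
  (2 : ℂ)⁻¹ • ((1 : Matrix (Fin 2) (Fin 2) ℂ) + (if b then (1 : ℂ) else -1) • dotPauli e)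

/-! For signs `a, b = ±1` take `G(a,b) = ¼((1 + abγ)·1 + (a e + b f)·σ)`; the `γ`-terms cancel in
each marginal, which are therefore `E` and `F` whatever `γ` is. Since `(v·σ)² = ‖v‖²·1`, the matrix
`t·1 + v·σ` is positive semidefinite as soon as `‖v‖ ≤ t`, so `G ≥ 0` follows from
`‖e + f‖ ≤ 1 + γ` and `‖e - f‖ ≤ 1 - γ`. The choice `γ = (‖e + f‖ - ‖e - f‖)/2` turns both of these
into `‖e + f‖ + ‖e - f‖ ≤ 2`. -/

lemma dotPauli_eq (v : EuclideanSpace ℝ (Fin 3)) :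
    dotPauli v = !![(v 2 : ℂ), v 0 - v 1 * Complex.I; v 0 + v 1 * Complex.I, -v 2] := by
  ext i j
  fin_cases i <;> fin_cases j <;> simp [dotPauli, pauli, Fin.sum_univ_three]; ring

lemma dotPauli_add (u v : EuclideanSpace ℝ (Fin 3)) :
    dotPauli (u + v) = dotPauli u + dotPauli v := by
  simp [dotPauli, add_smul, Finset.sum_add_distrib]

lemma dotPauli_smul (r : ℝ) (v : EuclideanSpace ℝ (Fin 3)) :
    dotPauli (r • v) = (r : ℂ) • dotPauli v := by
  simp only [dotPauli, PiLp.smul_apply, smul_eq_mul, Complex.ofReal_mul, Finset.smul_sum, smul_smul]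

lemma dotPauli_isHermitian (v : EuclideanSpace ℝ (Fin 3)) : (dotPauli v).IsHermitian := by
  rw [dotPauli_eq]
  ext i j
  fin_cases i <;> fin_cases j <;> simp [Complex.ext_iff]

lemma dotPauli_mul_self (v : EuclideanSpace ℝ (Fin 3)) :
    dotPauli v * dotPauli v = ((‖v‖ ^ 2 : ℝ) : ℂ) • 1 := by
  rw [dotPauli_eq, EuclideanSpace.real_norm_sq_eq, Fin.sum_univ_three]
  ext i j
  fin_cases i <;> fin_cases j <;> simp [Matrix.mul_apply, Complex.ext_iff, sq] <;> grind

lemma posSemidef_norm_smul_one_add_dotPauli (v : EuclideanSpace ℝ (Fin 3)) :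
    ((‖v‖ : ℂ) • 1 + dotPauli v).PosSemidef := by
  rcases eq_or_ne v 0 with rfl | hv
  · simpa [dotPauli] using PosSemidef.zero
  set A := (‖v‖ : ℂ) • (1 : Matrix (Fin 2) (Fin 2) ℂ) + dotPauli v
  have hA : A.IsHermitian :=
    (PosSemidef.one.smul (Complex.zero_le_real.2 (norm_nonneg v))).isHermitian.add
      (dotPauli_isHermitian v)
  have hsq : Aᴴ * A = (2 * ‖v‖) • A := by
    rw [hA.eq]
    simp only [A, add_mul, mul_add, smul_mul_assoc, mul_smul_comm, one_mul, mul_one,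
      dotPauli_mul_self]
    push_cast
    module
  have hA_eq : A = (2 * ‖v‖)⁻¹ • (Aᴴ * A) := by
    rw [hsq, smul_smul, inv_mul_cancel₀ (by positivity), one_smul]
  rw [hA_eq]
  exact (posSemidef_conjTranspose_mul_self A).smul (by positivity)

lemma posSemidef_smul_one_add_dotPauli {t : ℝ} {v : EuclideanSpace ℝ (Fin 3)} (h : ‖v‖ ≤ t) :
    ((t : ℂ) • 1 + dotPauli v).PosSemidef := by
  have hsplit : (t : ℂ) • (1 : Matrix (Fin 2) (Fin 2) ℂ) + dotPauli v
      = ((t - ‖v‖ : ℝ) : ℂ) • 1 + ((‖v‖ : ℂ) • 1 + dotPauli v) := by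
    push_cast; module
  rw [hsplit]
  exact (PosSemidef.one.smul (Complex.zero_le_real.2 (sub_nonneg.2 h))).add
    (posSemidef_norm_smul_one_add_dotPauli v)

def boolSign (b : Bool) : ℝ := if b then 1 else -1

noncomputable def buschJoint (γ : ℝ) (e f : EuclideanSpace ℝ (Fin 3)) (p : Bool × Bool) :
    Matrix (Fin 2) (Fin 2) ℂ :=
  (4 : ℝ)⁻¹ • (((1 + boolSign p.1 * boolSign p.2 * γ : ℝ) : ℂ) • 1
    + dotPauli (boolSign p.1 • e + boolSign p.2 • f))

lemma norm_boolSign_smul_add_boolSign_smul (e f : EuclideanSpace ℝ (Fin 3)) (a b : Bool) :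
    ‖boolSign a • e + boolSign b • f‖ = if a = b then ‖e + f‖ else ‖e - f‖ := by
  cases a <;> cases b <;> simp only [boolSign, Bool.false_eq_true, Bool.true_eq_false, ↓reduceIte,
    neg_one_smul, one_smul]
  · rw [← neg_add, norm_neg]
  · rw [neg_add_eq_sub, norm_sub_rev]
  · rw [← sub_eq_add_neg]

lemma posSemidef_buschJoint {γ : ℝ} {e f : EuclideanSpace ℝ (Fin 3)}
    (h_add : ‖e + f‖ ≤ 1 + γ) (h_sub : ‖e - f‖ ≤ 1 - γ) (p : Bool × Bool) :
    (buschJoint γ e f p).PosSemidef := by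
  obtain ⟨a, b⟩ := p
  refine PosSemidef.smul (posSemidef_smul_one_add_dotPauli ?_) (by norm_num)
  rw [norm_boolSign_smul_add_boolSign_smul]
  cases a <;> cases b <;> simp [boolSign] <;> linarith

lemma sum_buschJoint_snd (γ : ℝ) (e f : EuclideanSpace ℝ (Fin 3)) (a : Bool) :
    ∑ b, buschJoint γ e f (a, b) = blochObs e a := by
  simp only [Fintype.sum_bool, buschJoint, blochObs, dotPauli_add, dotPauli_smul]
  cases a <;> simp only [boolSign, Bool.false_eq_true, ↓reduceIte] <;> push_cast <;> module

lemma sum_buschJoint_fst (γ : ℝ) (e f : EuclideanSpace ℝ (Fin 3)) (b : Bool) :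
    ∑ a, buschJoint γ e f (a, b) = blochObs f b := by
  simp only [Fintype.sum_bool, buschJoint, blochObs, dotPauli_add, dotPauli_smul]
  cases b <;> simp only [boolSign, Bool.false_eq_true, ↓reduceIte] <;> push_cast <;> module

theorem unbiased_qubit_jointMeasurable_of_busch_general
    (e f : EuclideanSpace ℝ (Fin 3))
    (hbusch : ‖e + f‖ + ‖e - f‖ ≤ 2) :
    JointlyMeasurable (blochObs e) (blochObs f) := by
  refine ⟨buschJoint ((‖e + f‖ - ‖e - f‖) / 2) e f, posSemidef_buschJoint ?_ ?_,
    sum_buschJoint_snd _ e f, sum_buschJoint_fst _ e f⟩ <;> linarith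

/-- Busch criterion, sufficiency: two binary unbiased qubit observables with
Bloch vectors `e, f` satisfying `‖e + f‖ + ‖e − f‖ ≤ 2` are jointly measurable. -/
theorem unbiased_qubit_jointMeasurable_of_busch
    (e f : EuclideanSpace ℝ (Fin 3)) (he : ‖e‖ ≤ 1) (hf : ‖f‖ ≤ 1)
    (hbusch : ‖e + f‖ + ‖e - f‖ ≤ 2) :
    JointlyMeasurable (blochObs e) (blochObs f) :=
  unbiased_qubit_jointMeasurable_of_busch_general e f hbusch
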